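/- arXiv:2104.00600 — 2 statements merged into one kernel-verified Lean document; each statement's English description precedes it below -/
import Mathlib

section
/- Let G be a graph, u ∈ V(G), and for an integer k ≥ 1 let G_{(u,k)} denote the graph obtained from G by adding k new vertices which are pairwise adjacent and each adjacent to u (so that u together with the new vertices induces a complete graph K_{k+1}). Then the domination polynomials satisfy D_{G_{(u,k)}}(x) = (x+1)^{k−1}·[D_{G_{(u,1)}}(x) + D_{G∖u}(x)] − D_{G∖u}(x), where G∖u is the induced subgraph on V(G) ∖ {u}. -/
open scoped Classical

/-- The family of all dominating sets of `G`, as a `Finset` of `Finset`s. -/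
noncomputable def domSets {V : Type*} [Fintype V] (G : SimpleGraph V) :
    Finset (Finset V) :=
  Finset.univ.filter fun S => ∀ v ∉ S, ∃ u ∈ S, G.Adj u v

/-- The average order of a dominating set of `G`. -/
noncomputable def avd {V : Type*} [Fintype V] (G : SimpleGraph V) : ℚ :=
  (∑ S ∈ domSets G, (S.card : ℚ)) / ((domSets G).card : ℚ)

/-- A leaf is a vertex of degree one. -/
noncomputable def IsLeaf {V : Type*} [Fintype V] (G : SimpleGraph V) (v : V) : Prop :=
  G.degree v = 1

/-- The set of leaf neighbors of `w` in `G`. -/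
noncomputable def leafNbrSet {V : Type*} [Fintype V] (G : SimpleGraph V) (w : V) : Set V :=
  {v | G.Adj w v ∧ IsLeaf G v}

/-- A support vertex is a vertex adjacent to at least one leaf. -/
noncomputable def IsSupport {V : Type*} [Fintype V] (G : SimpleGraph V) (w : V) : Prop :=
  ∃ v, G.Adj w v ∧ IsLeaf G v

/-- The domination polynomial of `G`, evaluated at `x`. -/
noncomputable def domPoly {V : Type*} [Fintype V] (G : SimpleGraph V) (x : ℚ) : ℚ :=
  ∑ S ∈ domSets G, x ^ S.card


/-- `glueClique G u k` is the graph obtained from `G` by adding `k` new vertices which are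
pairwise adjacent and each adjacent to `u` (so `u` together with the new vertices induces
a complete graph `K_{k+1}`). -/
def glueClique {V : Type*} (G : SimpleGraph V) (u : V) (k : ℕ) :
    SimpleGraph (V ⊕ Fin k) :=
  SimpleGraph.fromRel fun a b =>
    match a, b with
    | Sum.inl x, Sum.inl y => G.Adj x y
    | Sum.inl x, Sum.inr _ => x = u
    | Sum.inr _, Sum.inl y => y = u
    | Sum.inr _, Sum.inr _ => True

/-!
Write a vertex set of `G_{(u,k)}` as `A ⊔ B` with `A ⊆ V(G)` and `B` a set of new vertices.
It dominates iff `A` dominates every vertex of `G` other than `u`, and either `B ≠ ∅` or `u ∈ A`.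
Summing over `B` gives `D_{G_{(u,k)}}(x) = (x+1)^k f(x) − D_{G∖u}(x)`, where `f` enumerates the
sets dominating `V(G) ∖ {u}` (those avoiding `u` being exactly the dominating sets of `G∖u`).
The case `k = 1` expresses `(x+1) f` through `D_{G_{(u,1)}}` and `D_{G∖u}`, which eliminates `f`.
-/

open Finset

namespace glueClique

variable {V : Type*} (G : SimpleGraph V) (u : V) (k : ℕ)

@[simp] lemma adj_inl_inl {a b : V} :
    (glueClique G u k).Adj (.inl a) (.inl b) ↔ G.Adj a b := by
  simp only [glueClique, SimpleGraph.fromRel_adj, ne_eq, Sum.inl.injEq]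
  exact ⟨fun ⟨_, h⟩ => h.elim id G.adj_symm, fun h => ⟨h.ne, .inl h⟩⟩

@[simp] lemma adj_inl_inr {a : V} {i : Fin k} :
    (glueClique G u k).Adj (.inl a) (.inr i) ↔ a = u := by
  simp [glueClique]

@[simp] lemma adj_inr_inl {i : Fin k} {a : V} :
    (glueClique G u k).Adj (.inr i) (.inl a) ↔ a = u := by
  simp [glueClique]

@[simp] lemma adj_inr_inr {i j : Fin k} :
    (glueClique G u k).Adj (.inr i) (.inr j) ↔ i ≠ j := by
  simp [glueClique]

end glueClique

def DominatesExcept {V : Type*} (G : SimpleGraph V) (u : V) (A : Finset V) : Prop :=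
  ∀ v ∉ A, v ≠ u → ∃ a ∈ A, G.Adj a v

lemma sum_pow_card_finset {β R : Type*} [Fintype β] [CommSemiring R] (x : R) :
    ∑ B : Finset β, x ^ #B = (x + 1) ^ Fintype.card β := by
  simpa using Fintype.sum_pow_mul_eq_add_pow β x 1

lemma sum_pow_card_nonempty {β R : Type*} [Fintype β] [CommRing R] (x : R) :
    ∑ B : Finset β with B.Nonempty, x ^ #B = (x + 1) ^ Fintype.card β - 1 := by
  have : ({B | B.Nonempty} : Finset (Finset β)) = univ.erase ∅ := by
    ext; simp [nonempty_iff_ne_empty]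
  rw [this, sum_erase_eq_sub (mem_univ _), sum_pow_card_finset, card_empty, pow_zero]

lemma domPoly_eq_sum_sum_disjSum {α β : Type*} [Fintype α] [Fintype β] [DecidableEq α]
    [DecidableEq β] (H : SimpleGraph (α ⊕ β)) (x : ℚ) :
    domPoly H x = ∑ A : Finset α, ∑ B : Finset β,
      if A.disjSum B ∈ domSets H then x ^ #A * x ^ #B else 0 := by
  rw [← Fintype.sum_prod_type', domPoly, ← univ_inter (domSets H), ← sum_ite_mem]
  exact (Fintype.sum_equiv sumEquiv.toEquiv.symm _ _ fun p => by simp [card_disjSum, pow_add]).symm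

section

variable {V : Type*} [Fintype V] (G : SimpleGraph V) (u : V)

lemma disjSum_mem_domSets_glueClique {k : ℕ} (hk : 1 ≤ k) (A : Finset V)
    (B : Finset (Fin k)) :
    A.disjSum B ∈ domSets (glueClique G u k) ↔
      DominatesExcept G u A ∧ (B.Nonempty ∨ u ∈ A) := by
  simp only [domSets, mem_filter, mem_univ, true_and, Sum.forall, Sum.exists, inl_mem_disjSum,
    inr_mem_disjSum, glueClique.adj_inl_inl, glueClique.adj_inr_inl, glueClique.adj_inl_inr,
    glueClique.adj_inr_inr, exists_eq_right]
  constructor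
  · rintro ⟨hV, hnew⟩
    refine ⟨fun v hv hvu => (hV v hv).resolve_right fun ⟨_, _, h⟩ => hvu h, ?_⟩
    rcases B.eq_empty_or_nonempty with rfl | hB
    · exact .inr ((hnew ⟨0, hk⟩ (notMem_empty _)).resolve_right (by simp))
    · exact .inl hB
  · rintro ⟨hA, ⟨j, hj⟩ | hu⟩
    · refine ⟨fun v hv => ?_, fun i hi => .inr ⟨j, hj, ne_of_mem_of_not_mem hj hi⟩⟩
      by_cases hvu : v = u
      · exact .inr ⟨j, hj, hvu⟩
      · exact .inl (hA v hv hvu)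
    · exact ⟨fun v hv => .inl (hA v hv (by rintro rfl; exact hv hu)), fun _ _ => .inl hu⟩

lemma mem_domSets_induce_compl_singleton {S : Finset ({u}ᶜ : Set V)} :
    S ∈ domSets (G.induce {u}ᶜ) ↔ DominatesExcept G u (S.map (.subtype _)) := by
  simp only [domSets, DominatesExcept, mem_filter, mem_univ, true_and, mem_map,
    Function.Embedding.coe_subtype, Subtype.forall, Subtype.exists, exists_and_right,
    exists_eq_right, SimpleGraph.comap_adj, Function.Embedding.subtype_apply, SimpleGraph.induce]
  exact ⟨fun h v hv hvu => h v hvu fun hS => hv ⟨hvu, hS⟩,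
    fun h v hvu hv => h v (fun ⟨_, hS⟩ => hv hS) hvu⟩

lemma domPoly_induce_compl_singleton (x : ℚ) :
    domPoly (G.induce {u}ᶜ) x = ∑ A with DominatesExcept G u A ∧ u ∉ A, x ^ #A := by
  have subtype_map_eq {A : Finset V} (hu : u ∉ A) :
      (A.subtype (· ∈ ({u}ᶜ : Set V))).map (.subtype _) = A :=
    subtype_map_of_mem fun a ha (h : a = u) => hu (h ▸ ha)
  refine sum_nbij' (fun S => S.map (.subtype _)) (fun A => A.subtype (· ∈ ({u}ᶜ : Set V)))
    (fun S hS => ?_) (fun A hA => ?_) (fun S _ => ?_) (fun A hA => ?_)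
    (fun S _ => by rw [card_map])
  · rw [mem_domSets_induce_compl_singleton] at hS
    simp [hS]
  · obtain ⟨hD, hu⟩ : DominatesExcept G u A ∧ u ∉ A := (mem_filter.1 hA).2
    rwa [mem_domSets_induce_compl_singleton, subtype_map_eq hu]
  · exact map_injective (.subtype _) (subtype_map_of_mem fun _ => property_of_mem_map_subtype S)
  · exact subtype_map_eq (mem_filter.1 hA).2.2

lemma domPoly_glueClique_eq {k : ℕ} (hk : 1 ≤ k) (x : ℚ) :
    domPoly (glueClique G u k) x =
      (x + 1) ^ k * ∑ A with DominatesExcept G u A, x ^ #A - domPoly (G.induce {u}ᶜ) x := by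
  have sum_over_new (A : Finset V) :
      ∑ B : Finset (Fin k), (if A.disjSum B ∈ domSets (glueClique G u k) then
        x ^ #A * x ^ #B else 0) =
      (if DominatesExcept G u A then x ^ #A * (x + 1) ^ k else 0) -
        if DominatesExcept G u A ∧ u ∉ A then x ^ #A else 0 := by
    simp_rw [disjSum_mem_domSets_glueClique G u hk]
    by_cases hD : DominatesExcept G u A <;> by_cases hu : u ∈ A
    all_goals simp [hD, hu, ← mul_sum, ← sum_filter, sum_pow_card_finset, sum_pow_card_nonempty,
      mul_sub]
  rw [domPoly_eq_sum_sum_disjSum, Fintype.sum_congr _ _ sum_over_new, sum_sub_distrib,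
    ← sum_filter, ← sum_filter, domPoly_induce_compl_singleton, mul_comm, sum_mul]

end

/-- For every `k ≥ 1`,
`D_{G_{(u,k)}}(x) = (x+1)^{k−1}·[D_{G_{(u,1)}}(x) + D_{G∖u}(x)] − D_{G∖u}(x)`. -/
theorem domPoly_glueClique {V : Type*} [Fintype V] (G : SimpleGraph V) (u : V)
    (k : ℕ) (hk : 1 ≤ k) (x : ℚ) :
    domPoly (glueClique G u k) x =
      (x + 1) ^ (k - 1) * (domPoly (glueClique G u 1) x + domPoly (G.induce {u}ᶜ) x)
        - domPoly (G.induce {u}ᶜ) x := by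
  obtain ⟨m, rfl⟩ : ∃ m, k = m + 1 := ⟨k - 1, by omega⟩
  rw [domPoly_glueClique_eq G u hk, domPoly_glueClique_eq G u le_rfl, Nat.add_sub_cancel]
  ring
end

section
/- Let T be a tree with |V(T)| ≥ 3 and let u be a vertex of T that is not a support vertex of T and has at most one neighbor in T that is not a support vertex of T. Let G_1 be the graph obtained from T by attaching a new leaf vertex v adjacent to u. Then |𝒟(G_1)| ≤ |𝒟(T)| + 3·|𝒟(T∖u)|, where T∖u is the induced subgraph on V(T) ∖ {u}. -/
open scoped Classical

/-- `addLeaf G u` is the graph obtained from `G` by attaching one new leaf vertex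
(the vertex `none`) adjacent to `u`. -/
def addLeaf {V : Type*} (G : SimpleGraph V) (u : V) : SimpleGraph (Option V) :=
  SimpleGraph.fromRel fun a b =>
    match a, b with
    | some x, some y => G.Adj x y
    | some x, none => x = u
    | none, some y => y = u
    | none, none => False



/-!
Split the dominating sets `S` of `G₁` according to whether `u ∈ S`. Those containing `u` are,
up to the choice of whether the new leaf belongs to `S`, dominating sets of `T` containing `u`;
those avoiding `u` must contain the leaf and restrict to dominating sets of `T - u`.
So `|𝒟(G₁)| ≤ 2|𝒟ᵤ(T)| + |𝒟(T - u)|`, where `𝒟ᵤ(T)` are the dominating sets containing `u`.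

It remains to see `|𝒟ᵤ(T)| ≤ 2|𝒟(T - u)|`. If `u` has no external private neighbour with
respect to `S ∈ 𝒟ᵤ(T)`, then `S \ {u}` dominates `T - u`. A private neighbour of `u` cannot be a
support vertex unless `u` is a leaf, so the hypothesis on `u` leaves a single candidate `x₀`
for it, and then `(S \ {u}) ∪ {x₀}` dominates `T - u`. Both maps are injective.
-/

section DominatingSets

variable {V : Type*} [Fintype V] {G : SimpleGraph V} {S : Finset V} {u : V}

lemma mem_domSets : S ∈ domSets G ↔ ∀ v ∉ S, ∃ w ∈ S, G.Adj w v := by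
  simp [domSets]

/-- `𝒟(G - u)`, with each dominating set of `G.induce {u}ᶜ` viewed as a subset of `V`. -/
noncomputable def domSetsDelete (G : SimpleGraph V) (u : V) : Finset (Finset V) :=
  Finset.univ.filter fun S => u ∉ S ∧ ∀ v ∉ S, v ≠ u → ∃ w ∈ S, G.Adj w v

lemma mem_domSetsDelete :
    S ∈ domSetsDelete G u ↔ u ∉ S ∧ ∀ v ∉ S, v ≠ u → ∃ w ∈ S, G.Adj w v := by
  simp [domSetsDelete]

lemma card_domSetsDelete_le :
    (domSetsDelete G u).card ≤ (domSets (G.induce ({u}ᶜ : Set V))).card := by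
  refine Finset.card_le_card_of_injOn (fun S => S.subtype (· ∈ ({u}ᶜ : Set V))) ?_ ?_
  · intro S hS
    obtain ⟨hu, hdom⟩ := mem_domSetsDelete.mp hS
    refine mem_domSets.mpr fun v hv => ?_
    obtain ⟨w, hwS, hwv⟩ := hdom v (by simpa using hv) v.2
    exact ⟨⟨w, fun hwu => hu (hwu ▸ hwS)⟩, by simpa using hwS, hwv⟩
  · intro S₁ hS₁ S₂ hS₂ heq
    have hu₁ := (mem_domSetsDelete.mp hS₁).1
    have hu₂ := (mem_domSetsDelete.mp hS₂).1
    ext x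
    by_cases hxu : x = u
    · subst hxu; simp [hu₁, hu₂]
    · simpa using congrArg (⟨x, hxu⟩ ∈ ·) heq

end DominatingSets

lemma Finset.eq_of_eraseNone_eq {α : Type*} {s t : Finset (Option α)}
    (hnone : none ∈ s ↔ none ∈ t) (h : eraseNone s = eraseNone t) : s = t := by
  ext (_ | x)
  · exact hnone
  · simpa using congrArg (x ∈ ·) h

section AddLeaf

variable {V : Type*} {G : SimpleGraph V} {u : V}

@[simp]
lemma addLeaf_adj_some_some {x y : V} : (addLeaf G u).Adj (some x) (some y) ↔ G.Adj x y := by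
  simp only [addLeaf, SimpleGraph.fromRel_adj, ne_eq, Option.some.injEq]
  exact ⟨fun ⟨_, h⟩ => h.elim id G.adj_symm, fun h => ⟨h.ne, Or.inl h⟩⟩

@[simp]
lemma addLeaf_adj_some_none {x : V} : (addLeaf G u).Adj (some x) none ↔ x = u := by
  simp [addLeaf]

@[simp]
lemma addLeaf_adj_none_some {x : V} : (addLeaf G u).Adj none (some x) ↔ x = u := by
  simp [addLeaf]

variable [Fintype V]

lemma eraseNone_mem_domSets {S : Finset (Option V)} (hS : S ∈ domSets (addLeaf G u))
    (hu : some u ∈ S) : Finset.eraseNone S ∈ domSets G := by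
  refine mem_domSets.mpr fun x hx => ?_
  rw [Finset.mem_eraseNone] at hx
  obtain ⟨_ | w, hwS, hwx⟩ := mem_domSets.mp hS (some x) hx
  · exact absurd (addLeaf_adj_none_some.mp hwx ▸ hu) hx
  · exact ⟨w, Finset.mem_eraseNone.mpr hwS, addLeaf_adj_some_some.mp hwx⟩

lemma none_mem_of_mem_domSets_addLeaf {S : Finset (Option V)}
    (hS : S ∈ domSets (addLeaf G u)) (hu : some u ∉ S) : none ∈ S := by
  by_contra hnone
  obtain ⟨_ | w, hwS, hw⟩ := mem_domSets.mp hS none hnone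
  · exact hnone hwS
  · exact hu (addLeaf_adj_some_none.mp hw ▸ hwS)

lemma eraseNone_mem_domSetsDelete {S : Finset (Option V)} (hS : S ∈ domSets (addLeaf G u))
    (hu : some u ∉ S) : Finset.eraseNone S ∈ domSetsDelete G u := by
  refine mem_domSetsDelete.mpr ⟨by simpa using hu, fun x hx hxu => ?_⟩
  rw [Finset.mem_eraseNone] at hx
  obtain ⟨_ | w, hwS, hwx⟩ := mem_domSets.mp hS (some x) hx
  · exact absurd (addLeaf_adj_none_some.mp hwx) hxu
  · exact ⟨w, Finset.mem_eraseNone.mpr hwS, addLeaf_adj_some_some.mp hwx⟩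

lemma card_filter_some_mem_domSets_addLeaf_le :
    ((domSets (addLeaf G u)).filter (some u ∈ ·)).card
      ≤ 2 * ((domSets G).filter (u ∈ ·)).card := by
  calc _ ≤ (Finset.univ ×ˢ (domSets G).filter (u ∈ ·)).card := by
        refine Finset.card_le_card_of_injOn (fun S => (decide (none ∈ S), Finset.eraseNone S))
          (fun S hS => ?_) (fun S₁ _ S₂ _ h => ?_)
        · obtain ⟨hS, hu⟩ := Finset.mem_filter.mp hS
          exact Finset.mem_product.mpr ⟨Finset.mem_univ _,
            Finset.mem_filter.mpr ⟨eraseNone_mem_domSets hS hu, Finset.mem_eraseNone.mpr hu⟩⟩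
        · simp only [Prod.mk.injEq, decide_eq_decide] at h
          exact Finset.eq_of_eraseNone_eq h.1 h.2
    _ = _ := by simp

lemma card_filter_some_not_mem_domSets_addLeaf_le :
    ((domSets (addLeaf G u)).filter (some u ∉ ·)).card ≤ (domSetsDelete G u).card := by
  refine Finset.card_le_card_of_injOn Finset.eraseNone (fun S hS => ?_)
    (fun S₁ hS₁ S₂ hS₂ h => ?_)
  · obtain ⟨hS, hu⟩ := Finset.mem_filter.mp hS
    exact eraseNone_mem_domSetsDelete hS hu
  · obtain ⟨hS₁, hu₁⟩ := Finset.mem_filter.mp hS₁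
    obtain ⟨hS₂, hu₂⟩ := Finset.mem_filter.mp hS₂
    exact Finset.eq_of_eraseNone_eq (iff_of_true (none_mem_of_mem_domSets_addLeaf hS₁ hu₁)
      (none_mem_of_mem_domSets_addLeaf hS₂ hu₂)) h

lemma card_domSets_addLeaf_le :
    (domSets (addLeaf G u)).card
      ≤ 2 * ((domSets G).filter (u ∈ ·)).card + (domSetsDelete G u).card := by
  rw [← Finset.card_filter_add_card_filter_not (p := (some u ∈ ·))]
  exact add_le_add card_filter_some_mem_domSets_addLeaf_le
    card_filter_some_not_mem_domSets_addLeaf_le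

end AddLeaf

section PrivateNeighbours

variable {V : Type*} [Fintype V] {G : SimpleGraph V} {S : Finset V} {u x x₀ : V}

def IsExtPrivateNbr (G : SimpleGraph V) (S : Finset V) (u x : V) : Prop :=
  G.Adj u x ∧ x ∉ S ∧ ∀ w ∈ S, G.Adj w x → w = u

lemma exists_adj_ne_of_not_isExtPrivateNbr (hS : S ∈ domSets G) (hx : x ∉ S)
    (hpriv : ¬ IsExtPrivateNbr G S u x) : ∃ w ∈ S, w ≠ u ∧ G.Adj w x := by
  obtain ⟨w, hwS, hwx⟩ := mem_domSets.mp hS x hx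
  by_cases hwu : w = u
  · subst hwu
    simp only [IsExtPrivateNbr, not_and, not_forall] at hpriv
    obtain ⟨w', hw'S, hw'x, hw'u⟩ := hpriv hwx hx
    exact ⟨w', hw'S, hw'u, hw'x⟩
  · exact ⟨w, hwS, hwu, hwx⟩

lemma erase_mem_domSetsDelete (hS : S ∈ domSets G) (hpriv : ∀ x, ¬ IsExtPrivateNbr G S u x) :
    S.erase u ∈ domSetsDelete G u := by
  refine mem_domSetsDelete.mpr ⟨Finset.notMem_erase u S, fun x hx hxu => ?_⟩
  obtain ⟨w, hwS, hwu, hwx⟩ :=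
    exists_adj_ne_of_not_isExtPrivateNbr hS (fun h => hx (Finset.mem_erase.mpr ⟨hxu, h⟩))
      (hpriv x)
  exact ⟨w, Finset.mem_erase.mpr ⟨hwu, hwS⟩, hwx⟩

lemma insert_erase_mem_domSetsDelete (hS : S ∈ domSets G) (hx₀u : x₀ ≠ u)
    (hpriv : ∀ x, IsExtPrivateNbr G S u x → x = x₀) :
    insert x₀ (S.erase u) ∈ domSetsDelete G u := by
  refine mem_domSetsDelete.mpr ⟨by simp [hx₀u.symm], fun x hx hxu => ?_⟩
  simp only [Finset.mem_insert, Finset.mem_erase, not_or, not_and] at hx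
  obtain ⟨w, hwS, hwu, hwx⟩ := exists_adj_ne_of_not_isExtPrivateNbr hS (hx.2 hxu)
    (fun h => hx.1 (hpriv x h))
  exact ⟨w, Finset.mem_insert_of_mem (Finset.mem_erase.mpr ⟨hwu, hwS⟩), hwx⟩

lemma card_filter_isExtPrivateNbr_le
    (hx₀ : ∀ S ∈ domSets G, ∀ x, IsExtPrivateNbr G S u x → x = x₀) :
    ((domSets G).filter fun S => u ∈ S ∧ IsExtPrivateNbr G S u x₀).card
      ≤ (domSetsDelete G u).card := by
  have hrecover : ∀ S : Finset V, x₀ ∉ S → u ∈ S →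
      insert u ((insert x₀ (S.erase u)).erase x₀) = S := fun S hx₀S huS => by
    rw [Finset.erase_insert (fun h => hx₀S (Finset.mem_of_mem_erase h)), Finset.insert_erase huS]
  refine Finset.card_le_card_of_injOn (fun S : Finset V => insert x₀ (S.erase u))
    (fun S hS => ?_) (fun S₁ hS₁ S₂ hS₂ h => ?_)
  · obtain ⟨hS, huS, hpriv⟩ := Finset.mem_filter.mp hS
    exact insert_erase_mem_domSetsDelete hS (fun h => hpriv.2.1 (h ▸ huS)) (hx₀ S hS)
  · obtain ⟨-, hu₁, hpriv₁⟩ := Finset.mem_filter.mp hS₁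
    obtain ⟨-, hu₂, hpriv₂⟩ := Finset.mem_filter.mp hS₂
    rw [← hrecover S₁ hpriv₁.2.1 hu₁, ← hrecover S₂ hpriv₂.2.1 hu₂]
    exact congrArg (fun s => insert u (s.erase x₀)) h

lemma card_filter_not_isExtPrivateNbr_le
    (hx₀ : ∀ S ∈ domSets G, ∀ x, IsExtPrivateNbr G S u x → x = x₀) :
    ((domSets G).filter fun S => u ∈ S ∧ ¬ IsExtPrivateNbr G S u x₀).card
      ≤ (domSetsDelete G u).card := by
  refine Finset.card_le_card_of_injOn (fun S : Finset V => S.erase u) (fun S hS => ?_)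
    (fun S₁ hS₁ S₂ hS₂ h => Finset.erase_injOn' u ?_ ?_ h)
  · obtain ⟨hS, -, hpriv⟩ := Finset.mem_filter.mp hS
    exact erase_mem_domSetsDelete hS fun x hx => hpriv (hx₀ S hS x hx ▸ hx)
  · exact (Finset.mem_filter.mp hS₁).2.1
  · exact (Finset.mem_filter.mp hS₂).2.1

lemma card_filter_mem_domSets_le
    (hx₀ : ∀ S ∈ domSets G, ∀ x, IsExtPrivateNbr G S u x → x = x₀) :
    ((domSets G).filter (u ∈ ·)).card ≤ 2 * (domSetsDelete G u).card := by
  rw [← Finset.card_filter_add_card_filter_not (p := (IsExtPrivateNbr G · u x₀)),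
    Finset.filter_filter, Finset.filter_filter, two_mul]
  exact add_le_add (card_filter_isExtPrivateNbr_le hx₀) (card_filter_not_isExtPrivateNbr_le hx₀)

lemma IsLeaf.eq_of_adj {ℓ a b : V} (hℓ : IsLeaf G ℓ) (ha : G.Adj ℓ a) (hb : G.Adj ℓ b) :
    a = b :=
  (SimpleGraph.degree_eq_one_iff_existsUnique_adj.mp hℓ).unique ha hb

/-- A leaf `ℓ` hanging at `x` must be dominated, and only `ℓ` itself or `x` can do it;
as `x ∉ S`, the leaf is in `S` and so equals `u`. -/
lemma isLeaf_of_isExtPrivateNbr_of_isSupport (hS : S ∈ domSets G)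
    (hx : IsExtPrivateNbr G S u x) (hsupp : IsSupport G x) : IsLeaf G u := by
  obtain ⟨ℓ, hxℓ, hℓ⟩ := hsupp
  by_cases hℓS : ℓ ∈ S
  · exact hx.2.2 ℓ hℓS hxℓ.symm ▸ hℓ
  · obtain ⟨w, hwS, hwℓ⟩ := mem_domSets.mp hS ℓ hℓS
    exact absurd (hℓ.eq_of_adj hwℓ.symm hxℓ.symm ▸ hwS) hx.2.1

lemma exists_forall_isExtPrivateNbr_eq (hone : {x | G.Adj u x ∧ ¬ IsSupport G x}.ncard ≤ 1) :
    ∃ x₀, ∀ S ∈ domSets G, ∀ x, IsExtPrivateNbr G S u x → x = x₀ := by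
  by_cases hu : IsLeaf G u
  · obtain ⟨w, hw, -⟩ := SimpleGraph.degree_eq_one_iff_existsUnique_adj.mp hu
    exact ⟨w, fun S _ x hx => hu.eq_of_adj hx.1 hw⟩
  · have : Nonempty V := ⟨u⟩
    obtain ⟨x₀, hx₀⟩ := (Set.ncard_le_one_iff_subset_singleton).mp hone
    exact ⟨x₀, fun S hS x hx =>
      hx₀ ⟨hx.1, fun hsupp => hu (isLeaf_of_isExtPrivateNbr_of_isSupport hS hx hsupp)⟩⟩

end PrivateNeighbours

theorem domSets_addLeaf_le_general {V : Type*} [Fintype V] (T : SimpleGraph V) (u : V)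
    (hone : {x | T.Adj u x ∧ ¬ IsSupport T x}.ncard ≤ 1) :
    (domSets (addLeaf T u)).card
      ≤ (domSets T).card + 3 * (domSets (T.induce ({u}ᶜ))).card := by
  obtain ⟨x₀, hx₀⟩ := exists_forall_isExtPrivateNbr_eq hone
  have hcontaining := card_filter_mem_domSets_le hx₀
  have hfilter_le := Finset.card_filter_le (domSets T) (u ∈ ·)
  have hdelete := card_domSetsDelete_le (G := T) (u := u)
  calc (domSets (addLeaf T u)).card
      ≤ 2 * ((domSets T).filter (u ∈ ·)).card + (domSetsDelete T u).card :=
        card_domSets_addLeaf_le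
    _ ≤ (domSets T).card + 3 * (domSets (T.induce ({u}ᶜ))).card := by omega

/-- If `T` is a tree on at least three vertices, `u` is not a support vertex of `T` and
has at most one non-support neighbor, and `G₁` is obtained from `T` by attaching a new
leaf at `u`, then `|𝒟(G₁)| ≤ |𝒟(T)| + 3·|𝒟(T∖u)|`. -/
theorem domSets_addLeaf_le {V : Type*} [Fintype V] (T : SimpleGraph V)
    (htree : T.IsTree) (hn : 3 ≤ Fintype.card V) (u : V)
    (hu : ¬ IsSupport T u)
    (hone : {x | T.Adj u x ∧ ¬ IsSupport T x}.ncard ≤ 1) :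
    (domSets (addLeaf T u)).card
      ≤ (domSets T).card + 3 * (domSets (T.induce ({u}ᶜ))).card :=
  domSets_addLeaf_le_general T u hone
end
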